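/- arXiv:2304.06965 — 2 statements merged into one kernel-verified Lean document; each statement's English description precedes it below -/
import Mathlib

section
/- Let (α_ℓ)_{ℓ∈ℕ} be a sequence of real numbers with 0 ≤ α_ℓ ≤ 1 for all ℓ and Σ_ℓ α_ℓ = n+1 for some n ∈ ℕ. Then Σ_{ℓ=0}^∞ α_ℓ (2ℓ+1) ≥ (n+1)². -/
/-!
A bathtub principle: among weights in `[0, 1]` of total mass `N`, a nondecreasing cost `w` is
minimised by filling the first `N` slots. Compared with that configuration, mass is only ever
moved from some `ℓ < N` to some `ℓ ≥ N`, which cannot decrease the cost. With `w ℓ = 2ℓ + 1`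
the minimum is `∑_{ℓ ≤ n} (2ℓ + 1) = (n + 1)²`.
-/

open scoped ENNReal
open Finset

theorem sum_range_le_tsum_mul_of_monotone {w α : ℕ → ℝ} (hw : Monotone w)
    (h0 : ∀ ℓ, 0 ≤ α ℓ) (h1 : ∀ ℓ, α ℓ ≤ 1) (hα : Summable α)
    (hαw : Summable fun ℓ ↦ α ℓ * w ℓ) {N : ℕ} (htot : ∑' ℓ, α ℓ = N) :
    ∑ ℓ ∈ range N, w ℓ ≤ ∑' ℓ, α ℓ * w ℓ := by
  set c : ℕ → ℝ := fun ℓ ↦ if ℓ ∈ range N then w ℓ - w N else 0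
  have hc : HasSum c (∑ ℓ ∈ range N, (w ℓ - w N)) := by
    have : HasSum c (∑ ℓ ∈ range N, c ℓ) := hasSum_sum_of_ne_finset_zero fun ℓ hℓ ↦ if_neg hℓ
    rwa [sum_congr rfl fun ℓ hℓ ↦ if_pos hℓ] at this
  -- `(α ℓ - [ℓ < N]) * (w ℓ - w N) ≥ 0`: both factors are `≤ 0` below `N` and `≥ 0` from `N` on.
  have hpt : ∀ ℓ, w N * α ℓ + c ℓ ≤ α ℓ * w ℓ := by
    intro ℓ
    by_cases hℓ : ℓ < N
    · have := hw hℓ.le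
      simp only [c, mem_range, if_pos hℓ]
      nlinarith [h1 ℓ]
    · have := hw (not_lt.mp hℓ)
      simp only [c, mem_range, if_neg hℓ]
      nlinarith [h0 ℓ]
  calc ∑ ℓ ∈ range N, w ℓ = w N * ∑' ℓ, α ℓ + ∑ ℓ ∈ range N, (w ℓ - w N) := by
        simp only [htot, sum_sub_distrib, sum_const, card_range, nsmul_eq_mul]
        ring
    _ = ∑' ℓ, (w N * α ℓ + c ℓ) := by
        rw [(hα.mul_left _).tsum_add hc.summable, tsum_mul_left, hc.tsum_eq]
    _ ≤ ∑' ℓ, α ℓ * w ℓ := ((hα.mul_left _).add hc.summable).tsum_le_tsum hpt hαw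

theorem sum_range_two_mul_add_one (n : ℕ) :
    ∑ ℓ ∈ range n, (2 * (ℓ : ℝ) + 1) = (n : ℝ) ^ 2 := by
  induction n with
  | zero => simp
  | succ n ih => rw [sum_range_succ, ih]; push_cast; ring

theorem summable_of_tsum_ofReal_ne_top {ι : Type*} {f : ι → ℝ} (hf : ∀ i, 0 ≤ f i)
    (h : ∑' i, ENNReal.ofReal (f i) ≠ ∞) : Summable f := by
  simpa only [ENNReal.toReal_ofReal (hf _)] using ENNReal.summable_toReal h

theorem stmt_6 (α : ℕ → ℝ) (n : ℕ) (h0 : ∀ ℓ, 0 ≤ α ℓ) (h1 : ∀ ℓ, α ℓ ≤ 1)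
    (hsum : Summable α) (htot : ∑' ℓ : ℕ, α ℓ = (n : ℝ) + 1) :
    ((n : ℝ≥0∞) + 1) ^ 2 ≤ ∑' ℓ : ℕ, ENNReal.ofReal (α ℓ * (2 * (ℓ : ℝ) + 1)) := by
  have hnn : ∀ ℓ, 0 ≤ α ℓ * (2 * (ℓ : ℝ) + 1) := fun ℓ ↦ mul_nonneg (h0 ℓ) (by positivity)
  by_cases htop : ∑' ℓ, ENNReal.ofReal (α ℓ * (2 * (ℓ : ℝ) + 1)) = ∞
  · simp [htop]
  have hαw := summable_of_tsum_ofReal_ne_top hnn htop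
  have hreal : ((n : ℝ) + 1) ^ 2 ≤ ∑' ℓ, α ℓ * (2 * (ℓ : ℝ) + 1) := by
    have := sum_range_le_tsum_mul_of_monotone (w := fun ℓ : ℕ ↦ 2 * (ℓ : ℝ) + 1)
      (fun a b hab ↦ by dsimp only; gcongr) h0 h1 hsum hαw (N := n + 1) (by exact_mod_cast htot)
    rwa [sum_range_two_mul_add_one, Nat.cast_succ] at this
  rw [← ENNReal.ofReal_tsum_of_nonneg hnn hαw]
  calc ((n : ℝ≥0∞) + 1) ^ 2 = ENNReal.ofReal (((n : ℝ) + 1) ^ 2) := by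
        rw [ENNReal.ofReal_pow (by positivity)]; norm_cast
    _ ≤ _ := ENNReal.ofReal_le_ofReal hreal
end

section
/- Abstract mean-dispersion principle: let {e_ℓ} be an orthonormal basis of a Hilbert space H and λ_ℓ = 2ℓ+1. If {f_k}_{k=0}^n is an orthonormal family in H, then Σ_{k=0}^n Σ_ℓ λ_ℓ |⟨f_k, e_ℓ⟩|² ≥ (n+1)². -/
/-! Put `a ℓ = ∑ₖ |⟨f k, e ℓ⟩|²`. Bessel's inequality gives `a ℓ ≤ 1` and Parseval's identity
gives `∑ ℓ, a ℓ = n + 1`. Against the increasing weights `2ℓ + 1`, such a distribution of mass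
costs at least as much as filling the first `n + 1` slots completely (bathtub principle), that is
`∑_{ℓ ≤ n} (2ℓ + 1) = (n + 1)²`. -/

open scoped ENNReal InnerProductSpace
open Finset

namespace ENNReal

/- Bathtub principle: the deficit `∑_{ℓ<N} (1 - a ℓ)` below `N` costs at most `w N` per unit and
reappears beyond `N`, where every weight is at least `w N`. -/
theorem sum_range_le_tsum_mul_of_monotone {w : ℕ → ℝ≥0∞} (hw : Monotone w) {a : ℕ → ℝ≥0∞}
    (ha : ∀ ℓ, a ℓ ≤ 1) {N : ℕ} (hN : (N : ℝ≥0∞) ≤ ∑' ℓ, a ℓ) :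
    ∑ ℓ ∈ range N, w ℓ ≤ ∑' ℓ, w ℓ * a ℓ := by
  have hsplit (g : ℕ → ℝ≥0∞) : ∑' ℓ, g ℓ = ∑ ℓ ∈ range N, g ℓ + ∑' ℓ, g (ℓ + N) :=
    ENNReal.summable.sum_add_tsum_nat_add'.symm
  have hhead : ∑ ℓ ∈ range N, a ℓ ≠ ∞ :=
    ne_top_of_le_ne_top (natCast_ne_top N) <|
      (sum_le_sum fun ℓ _ => ha ℓ).trans_eq (by simp)
  have hdeficit : ∑ ℓ ∈ range N, (1 - a ℓ) ≤ ∑' ℓ, a (ℓ + N) := by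
    refine (ENNReal.add_le_add_iff_left hhead).1 ?_
    calc ∑ ℓ ∈ range N, a ℓ + ∑ ℓ ∈ range N, (1 - a ℓ)
        = N := by simp [← sum_add_distrib, add_tsub_cancel_of_le (ha _)]
      _ ≤ _ := hN.trans_eq (hsplit a)
  calc ∑ ℓ ∈ range N, w ℓ
      ≤ ∑ ℓ ∈ range N, (w ℓ * a ℓ + w N * (1 - a ℓ)) := by
        refine sum_le_sum fun ℓ hℓ => ?_
        calc w ℓ = w ℓ * a ℓ + w ℓ * (1 - a ℓ) := by
              rw [← mul_add, add_tsub_cancel_of_le (ha ℓ), mul_one]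
          _ ≤ _ := by gcongr; exact hw (mem_range.1 hℓ).le
    _ = ∑ ℓ ∈ range N, w ℓ * a ℓ + w N * ∑ ℓ ∈ range N, (1 - a ℓ) := by
        rw [sum_add_distrib, mul_sum]
    _ ≤ ∑ ℓ ∈ range N, w ℓ * a ℓ + ∑' ℓ, w N * a (ℓ + N) := by
        rw [ENNReal.tsum_mul_left]; gcongr
    _ ≤ ∑ ℓ ∈ range N, w ℓ * a ℓ + ∑' ℓ, w (ℓ + N) * a (ℓ + N) := by
        gcongr with ℓ; exact hw (Nat.le_add_left N ℓ)
    _ = ∑' ℓ, w ℓ * a ℓ := (hsplit _).symm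

theorem sum_range_two_mul_add_one (N : ℕ) :
    ∑ ℓ ∈ range N, (2 * (ℓ : ℝ≥0∞) + 1) = (N : ℝ≥0∞) ^ 2 := by
  induction N with
  | zero => simp
  | succ m ih => rw [sum_range_succ, ih]; push_cast; ring

end ENNReal

section

variable {𝕜 E ι : Type*} [RCLike 𝕜] [NormedAddCommGroup E] [InnerProductSpace 𝕜 E]

theorem HilbertBasis.tsum_enorm_inner_sq {κ : Type*} (b : HilbertBasis κ 𝕜 E) (x : E) :
    ∑' i, ‖⟪x, b i⟫_𝕜‖ₑ ^ 2 = ‖x‖ₑ ^ 2 := by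
  have hparseval := lp.hasSum_norm (p := 2) (by norm_num) (b.repr x)
  simp only [b.repr_apply_apply, LinearIsometryEquiv.norm_map, ENNReal.toReal_ofNat,
    Real.rpow_two, norm_inner_symm] at hparseval
  simp only [← ofReal_norm, ← ENNReal.ofReal_pow (norm_nonneg _)]
  rw [← ENNReal.ofReal_tsum_of_nonneg (fun _ => by positivity) hparseval.summable,
    hparseval.tsum_eq]

theorem Orthonormal.sum_enorm_inner_sq_le {v : ι → E} (hv : Orthonormal 𝕜 v) (s : Finset ι)
    (x : E) : ∑ i ∈ s, ‖⟪v i, x⟫_𝕜‖ₑ ^ 2 ≤ ‖x‖ₑ ^ 2 := by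
  simp only [← ofReal_norm, ← ENNReal.ofReal_pow (norm_nonneg _),
    ← ENNReal.ofReal_sum_of_nonneg fun _ _ => sq_nonneg _]
  exact ENNReal.ofReal_le_ofReal (hv.sum_inner_products_le x)

theorem Orthonormal.sum_range_card_le_sum_tsum_mul_enorm_inner_sq
    (e : HilbertBasis ℕ 𝕜 E) {f : ι → E} (hf : Orthonormal 𝕜 f) (s : Finset ι)
    {w : ℕ → ℝ≥0∞} (hw : Monotone w) :
    ∑ ℓ ∈ range #s, w ℓ ≤ ∑ k ∈ s, ∑' ℓ, w ℓ * ‖⟪f k, e ℓ⟫_𝕜‖ₑ ^ 2 := by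
  set a : ℕ → ℝ≥0∞ := fun ℓ => ∑ k ∈ s, ‖⟪f k, e ℓ⟫_𝕜‖ₑ ^ 2
  have hbessel (ℓ : ℕ) : a ℓ ≤ 1 :=
    (hf.sum_enorm_inner_sq_le s (e ℓ)).trans_eq (by simp [← ofReal_norm, e.orthonormal.1 ℓ])
  have hmass : ∑' ℓ, a ℓ = #s := by
    rw [Summable.tsum_finsetSum fun _ _ => ENNReal.summable,
      sum_congr rfl fun k _ => e.tsum_enorm_inner_sq (f k)]
    simp [← ofReal_norm, hf.1]
  calc ∑ ℓ ∈ range #s, w ℓ ≤ ∑' ℓ, w ℓ * a ℓ :=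
        ENNReal.sum_range_le_tsum_mul_of_monotone hw hbessel hmass.ge
    _ = _ := by simp only [a, mul_sum, Summable.tsum_finsetSum fun _ _ => ENNReal.summable]

end

theorem stmt_10_general {H : Type*} [NormedAddCommGroup H] [InnerProductSpace ℂ H]
    (e : HilbertBasis ℕ ℂ H) (f : ℕ → H) (hf : Orthonormal ℂ f)
    (n : ℕ) :
    ((n : ℝ≥0∞) + 1) ^ 2 ≤
      ∑ k ∈ Finset.range (n + 1), ∑' ℓ : ℕ,
        ENNReal.ofReal ((2 * (ℓ : ℝ) + 1) * ‖(inner ℂ (f k) (e ℓ) : ℂ)‖ ^ 2) := by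
  have hweight (ℓ : ℕ) (z : ℂ) :
      ENNReal.ofReal ((2 * (ℓ : ℝ) + 1) * ‖z‖ ^ 2) = (2 * (ℓ : ℝ≥0∞) + 1) * ‖z‖ₑ ^ 2 := by
    rw [ENNReal.ofReal_mul (by positivity), ENNReal.ofReal_pow (norm_nonneg _),
      ofReal_norm]
    norm_cast
  have hw : Monotone fun ℓ : ℕ => 2 * (ℓ : ℝ≥0∞) + 1 := fun _ _ hij => by dsimp only; gcongr
  simpa [hweight, ENNReal.sum_range_two_mul_add_one] using
    hf.sum_range_card_le_sum_tsum_mul_enorm_inner_sq e (range (n + 1)) hw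

theorem stmt_10 {H : Type*} [NormedAddCommGroup H] [InnerProductSpace ℂ H]
    [CompleteSpace H] (e : HilbertBasis ℕ ℂ H) (f : ℕ → H) (hf : Orthonormal ℂ f)
    (n : ℕ) :
    ((n : ℝ≥0∞) + 1) ^ 2 ≤
      ∑ k ∈ Finset.range (n + 1), ∑' ℓ : ℕ,
        ENNReal.ofReal ((2 * (ℓ : ℝ) + 1) * ‖(inner ℂ (f k) (e ℓ) : ℂ)‖ ^ 2) :=
  stmt_10_general e f hf n
end
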